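/- arXiv:2211.16557 — 3 statements merged into one kernel-verified Lean document; each statement's English description precedes it below -/
import Mathlib

section
/- Let V₁,…,Vₙ be i.i.d. standard Cauchy random variables on a probability space, let V̄ = (1/n)Σᵢ Vᵢ, and let ε > 0 and α ∈ (0, 1/2). Then P( ‖V − V̄·1ₙ‖₂ < n^{α+1/2}·ε⁻¹ ) ≤ P( Σᵢ₌₁ⁿ Vᵢ² < n^{2α+1}·(ε⁻² + 1) ) + 2·F(−n^{α/2}), where ‖V − V̄·1ₙ‖₂² = Σᵢ Vᵢ² − n·V̄² and F is the standard Cauchy cumulative distribution function; in particular the second term on the right-hand side equals P(|V̄| > n^{α/2}), because the sample mean of n i.i.d. standard Cauchy random variables is itself standard Cauchy. -/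
open MeasureTheory ProbabilityTheory Real

/-- The Cauchy distribution on `ℝ` with location `l` and scale `γ`. -/
noncomputable def cauchyMeasure (l γ : ℝ) : Measure ℝ :=
  volume.withDensity fun x => ENNReal.ofReal (γ / (π * (γ ^ 2 + (x - l) ^ 2)))

/-- The standard Cauchy cumulative distribution function `F(x) = 1/2 + (1/π)·arctan x`. -/
noncomputable def stdCauchyCDF (x : ℝ) : ℝ := 1 / 2 + (1 / π) * Real.arctan x

/-!
Cauchy laws are stable under independent sums: the convolution of the Cauchy densities of
scales `a` and `b` is the Cauchy density of scale `a + b`, which is checked with an explicit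
antiderivative of `y ↦ p_a(y) p_b(x - y)`. Hence `n V̄ = ∑ Vᵢ` is Cauchy of scale `n`, and
`|V̄| > n^{α/2}` has probability `2F(-n^{α/2})`.

Since `‖V - V̄·1ₙ‖² = ∑ Vᵢ² - n V̄²`, on the event `|V̄| ≤ n^{α/2}` the bound
`‖V - V̄·1ₙ‖ < n^{α+1/2} ε⁻¹` gives `∑ Vᵢ² < n^{2α+1} ε⁻² + n^{1+α} ≤ n^{2α+1} (ε⁻² + 1)`.
-/

open Filter Topology Bornology
open scoped NNReal Finset

lemma tendsto_log_sub_log_cobounded (a b x : ℝ) :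
    Tendsto (fun y => log (a ^ 2 + y ^ 2) - log (b ^ 2 + (y - x) ^ 2)) (cobounded ℝ) (𝓝 0) := by
  have hinv : Tendsto (fun y : ℝ => y⁻¹) (cobounded ℝ) (𝓝 0) := tendsto_inv₀_cobounded
  have hratio := (((hinv.pow 2).const_mul (a ^ 2)).add_const 1).div
    (((hinv.pow 2).const_mul (b ^ 2)).add (((hinv.const_mul x).const_sub 1).pow 2)) (by norm_num)
  norm_num [-IsOrderBornology.cobounded_eq] at hratio
  convert ((continuousAt_log one_ne_zero).tendsto.comp hratio).congr' ?_ using 2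
  · simp
  filter_upwards [eventually_ne_cobounded 0, eventually_ne_cobounded x] with y hy hxy
  have hyx : y - x ≠ 0 := sub_ne_zero.2 hxy
  rw [Function.comp_apply, Pi.div_apply, ← log_div (by positivity) (by positivity)]
  congr 1
  field_simp

lemma tendsto_arctan_sub_div_atTop {c : ℝ} (hc : 0 < c) (x : ℝ) :
    Tendsto (fun y => arctan ((y - x) / c)) atTop (𝓝 (π / 2)) :=
  (tendsto_arctan_atTop.mono_right nhdsWithin_le_nhds).comp <|
    (tendsto_atTop_add_const_right _ (-x) tendsto_id).atTop_div_const hc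

lemma tendsto_arctan_sub_div_atBot {c : ℝ} (hc : 0 < c) (x : ℝ) :
    Tendsto (fun y => arctan ((y - x) / c)) atBot (𝓝 (-(π / 2))) :=
  (tendsto_arctan_atBot.mono_right nhdsWithin_le_nhds).comp <|
    (tendsto_atBot_add_const_right _ (-x) tendsto_id).atBot_div_const hc

theorem Finset.sum_sub_sum_div_card_sq {ι 𝕜 : Type*} [Field 𝕜] [CharZero 𝕜] (s : Finset ι)
    (v : ι → 𝕜) :
    ∑ i ∈ s, (v i - (∑ j ∈ s, v j) / #s) ^ 2 = ∑ i ∈ s, v i ^ 2 - (∑ j ∈ s, v j) ^ 2 / #s := by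
  rcases s.eq_empty_or_nonempty with rfl | hs
  · simp
  have : (#s : 𝕜) ≠ 0 := by exact_mod_cast hs.card_pos.ne'
  simp only [sub_sq, Finset.sum_add_distrib, Finset.sum_sub_distrib, ← Finset.sum_mul,
    ← Finset.mul_sum, Finset.sum_const, nsmul_eq_mul]
  field_simp
  ring

namespace ProbabilityTheory

lemma cauchyPDFReal_nonneg (x₀ : ℝ) (γ : ℝ≥0) (x : ℝ) : 0 ≤ cauchyPDFReal x₀ γ x := by
  rw [cauchyPDFReal_def]
  positivity

lemma cauchyPDFReal_le (x₀ : ℝ) (γ : ℝ≥0) (x : ℝ) : cauchyPDFReal x₀ γ x ≤ π⁻¹ * γ⁻¹ := by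
  rw [cauchyPDFReal_def']
  exact mul_le_of_le_one_right (by positivity) (inv_le_one_of_one_le₀ (by nlinarith))

-- Partial fractions: `p_a(y) p_b(x - y)` is a combination of `y / (a² + y²)`,
-- `(y - x) / (b² + (y - x)²)`, `1 / (a² + y²)` and `1 / (b² + (y - x)²)`.
noncomputable def cauchyProductPrimitive (a b x y : ℝ) : ℝ :=
  a * b / (π ^ 2 * (((a + b) ^ 2 + x ^ 2) * ((a - b) ^ 2 + x ^ 2))) *
    (x * (log (a ^ 2 + y ^ 2) - log (b ^ 2 + (y - x) ^ 2))
      + (b ^ 2 + x ^ 2 - a ^ 2) / a * arctan (y / a)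
      + (a ^ 2 + x ^ 2 - b ^ 2) / b * arctan ((y - x) / b))

section CauchyProduct

variable {a b : ℝ≥0} {x : ℝ}

lemma hasDerivAt_cauchyProductPrimitive (ha : a ≠ 0) (hb : b ≠ 0) (hx : x ≠ 0) (y : ℝ) :
    HasDerivAt (cauchyProductPrimitive a b x)
      (cauchyPDFReal 0 a y * cauchyPDFReal 0 b (x - y)) y := by
  have ha : (0 : ℝ) < a := by positivity
  have hb : (0 : ℝ) < b := by positivity
  have hu : HasDerivAt (fun y : ℝ => a ^ 2 + y ^ 2) (2 * y) y := by
    simpa using (hasDerivAt_pow 2 y).const_add ((a : ℝ) ^ 2)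
  have hv : HasDerivAt (fun y : ℝ => b ^ 2 + (y - x) ^ 2) (2 * (y - x)) y := by
    simpa using (((hasDerivAt_id y).sub_const x).pow 2).const_add ((b : ℝ) ^ 2)
  have h1 := (hasDerivAt_arctan (y / a)).comp y ((hasDerivAt_id y).div_const (a : ℝ))
  have h2 := (hasDerivAt_arctan ((y - x) / b)).comp y
    (((hasDerivAt_id y).sub_const x).div_const (b : ℝ))
  have := (((((hu.log (by positivity)).sub (hv.log (by positivity))).const_mul x).add
    (h1.const_mul ((b ^ 2 + x ^ 2 - a ^ 2) / a))).add
      (h2.const_mul ((a ^ 2 + x ^ 2 - b ^ 2) / b))).const_mul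
        (a * b / (π ^ 2 * (((a + b) ^ 2 + x ^ 2) * ((a - b) ^ 2 + x ^ 2))))
  refine this.congr_deriv ?_
  have := pi_pos
  have : (0 : ℝ) < (a - b) ^ 2 + x ^ 2 := by positivity
  simp only [cauchyPDFReal_def, sub_zero]
  field_simp
  ring

lemma tendsto_cauchyProductPrimitive_atTop (ha : a ≠ 0) (hb : b ≠ 0) (hx : x ≠ 0) :
    Tendsto (cauchyProductPrimitive a b x) atTop (𝓝 (cauchyPDFReal 0 (a + b) x / 2)) := by
  have ha : (0 : ℝ) < a := by positivity
  have hb : (0 : ℝ) < b := by positivity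
  have h1 : Tendsto (fun y => arctan (y / a)) atTop (𝓝 (π / 2)) := by
    simpa using tendsto_arctan_sub_div_atTop ha 0
  have : Tendsto (cauchyProductPrimitive a b x) _ _ := ((((tendsto_log_sub_log_cobounded a b x)
    |>.mono_left IsOrderBornology.atTop_le_cobounded).const_mul x).add
      (h1.const_mul ((b ^ 2 + x ^ 2 - a ^ 2) / a))).add
      ((tendsto_arctan_sub_div_atTop hb x).const_mul ((a ^ 2 + x ^ 2 - b ^ 2) / b)) |>.const_mul
        (a * b / (π ^ 2 * (((a + b) ^ 2 + x ^ 2) * ((a - b) ^ 2 + x ^ 2))))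
  convert this using 2
  have := pi_pos
  have : (0 : ℝ) < (a - b) ^ 2 + x ^ 2 := by positivity
  simp only [cauchyPDFReal_def, sub_zero, NNReal.coe_add]
  field_simp
  ring

lemma tendsto_cauchyProductPrimitive_atBot (ha : a ≠ 0) (hb : b ≠ 0) (hx : x ≠ 0) :
    Tendsto (cauchyProductPrimitive a b x) atBot (𝓝 (-(cauchyPDFReal 0 (a + b) x / 2))) := by
  have ha : (0 : ℝ) < a := by positivity
  have hb : (0 : ℝ) < b := by positivity
  have h1 : Tendsto (fun y => arctan (y / a)) atBot (𝓝 (-(π / 2))) := by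
    simpa using tendsto_arctan_sub_div_atBot ha 0
  have : Tendsto (cauchyProductPrimitive a b x) _ _ := ((((tendsto_log_sub_log_cobounded a b x)
    |>.mono_left IsOrderBornology.atBot_le_cobounded).const_mul x).add
      (h1.const_mul ((b ^ 2 + x ^ 2 - a ^ 2) / a))).add
      ((tendsto_arctan_sub_div_atBot hb x).const_mul ((a ^ 2 + x ^ 2 - b ^ 2) / b)) |>.const_mul
        (a * b / (π ^ 2 * (((a + b) ^ 2 + x ^ 2) * ((a - b) ^ 2 + x ^ 2))))
  convert this using 2
  have := pi_pos
  have : (0 : ℝ) < (a - b) ^ 2 + x ^ 2 := by positivity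
  simp only [cauchyPDFReal_def, sub_zero, NNReal.coe_add]
  field_simp
  ring

lemma integrable_cauchyPDFReal_mul_cauchyPDFReal_sub (a b : ℝ≥0) (x : ℝ) :
    Integrable fun y => cauchyPDFReal 0 a y * cauchyPDFReal 0 b (x - y) :=
  (integrable_cauchyPDFReal 0).mul_bdd
    (measurable_cauchyPDFReal 0 b |>.comp (measurable_const.sub measurable_id)).aestronglyMeasurable
    (ae_of_all _ fun y => by
      rw [Real.norm_of_nonneg (cauchyPDFReal_nonneg 0 b _)]
      exact cauchyPDFReal_le 0 b _)

lemma integral_cauchyPDFReal_mul_cauchyPDFReal_sub (ha : a ≠ 0) (hb : b ≠ 0) (hx : x ≠ 0) :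
    ∫ y, cauchyPDFReal 0 a y * cauchyPDFReal 0 b (x - y) = cauchyPDFReal 0 (a + b) x := by
  rw [integral_of_hasDerivAt_of_tendsto (hasDerivAt_cauchyProductPrimitive ha hb hx)
    (integrable_cauchyPDFReal_mul_cauchyPDFReal_sub a b x)
    (tendsto_cauchyProductPrimitive_atBot ha hb hx) (tendsto_cauchyProductPrimitive_atTop ha hb hx)]
  ring

end CauchyProduct

theorem cauchyMeasure_conv_cauchyMeasure (a b : ℝ≥0) :
    cauchyMeasure 0 a ∗ cauchyMeasure 0 b = cauchyMeasure 0 (a + b) := by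
  rcases eq_or_ne a 0 with rfl | ha
  · simp
  rcases eq_or_ne b 0 with rfl | hb
  · simp
  rw [cauchyMeasure_of_scale_ne_zero 0 ha, cauchyMeasure_of_scale_ne_zero 0 hb,
    cauchyMeasure_of_scale_ne_zero 0 (by simp [ha]),
    conv_withDensity_eq_lconvolution (measurable_cauchyPDF 0 a) (measurable_cauchyPDF 0 b)]
  refine withDensity_congr_ae ?_
  filter_upwards [volume.ae_ne 0] with x hx
  simp only [lconvolution_def, cauchyPDF_def, neg_add_eq_sub,
    ← ENNReal.ofReal_mul (cauchyPDFReal_nonneg 0 a _)]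
  rw [← ofReal_integral_eq_lintegral_ofReal (integrable_cauchyPDFReal_mul_cauchyPDFReal_sub a b x)
    (ae_of_all _ fun y => mul_nonneg (cauchyPDFReal_nonneg 0 a y) (cauchyPDFReal_nonneg 0 b _)),
    integral_cauchyPDFReal_mul_cauchyPDFReal_sub ha hb hx]

theorem iIndepFun.hasLaw_sum_cauchyMeasure {Ω ι : Type*} [MeasurableSpace Ω] {P : Measure Ω}
    [IsProbabilityMeasure P] {V : ι → Ω → ℝ} {γ : ι → ℝ≥0} (hind : iIndepFun V P)
    (hV : ∀ i, HasLaw (V i) (cauchyMeasure 0 (γ i)) P) (s : Finset ι) :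
    HasLaw (∑ i ∈ s, V i) (cauchyMeasure 0 (∑ i ∈ s, γ i)) P := by
  classical
  induction s using Finset.induction_on with
  | empty =>
    simpa using hasLaw_dirac_of_ae_eq (X := (0 : Ω → ℝ)) (x := 0) (ae_of_all P fun _ => rfl)
  | insert i s hi ih =>
    rw [Finset.sum_insert hi, Finset.sum_insert hi, add_comm, add_comm (γ i),
      ← cauchyMeasure_conv_cauchyMeasure]
    exact IndepFun.hasLaw_add ih (hV i)
      (hind.indepFun_finsetSum_of_notMem₀ (fun j => (hV j).aemeasurable) hi)

lemma measureReal_cauchyMeasure_Icc (x₀ : ℝ) {γ : ℝ≥0} (hγ : γ ≠ 0) {a b : ℝ} (hab : a ≤ b) :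
    (cauchyMeasure x₀ γ).real (Set.Icc a b) =
      (arctan ((b - x₀) / γ) - arctan ((a - x₀) / γ)) / π := by
  have hγ' : (0 : ℝ) < γ := by positivity
  have hderiv (x : ℝ) :
      HasDerivAt (fun x => arctan ((x - x₀) / γ) / π) (cauchyPDFReal x₀ γ x) x := by
    refine (((hasDerivAt_arctan _).comp x
      (((hasDerivAt_id x).sub_const x₀).div_const (γ : ℝ))).div_const π).congr_deriv ?_
    rw [cauchyPDFReal_def, id]
    have := pi_pos
    field_simp
    ring
  rw [cauchyMeasure_of_scale_ne_zero x₀ hγ, measureReal_def, withDensity_apply _ measurableSet_Icc]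
  simp only [cauchyPDF_def]
  rw [← ofReal_integral_eq_lintegral_ofReal (integrable_cauchyPDFReal x₀).integrableOn
      (ae_of_all _ (cauchyPDFReal_nonneg x₀ γ)),
    ENNReal.toReal_ofReal
      (setIntegral_nonneg measurableSet_Icc fun x _ => cauchyPDFReal_nonneg x₀ γ x),
    integral_Icc_eq_integral_Ioc, ← intervalIntegral.integral_of_le hab,
    intervalIntegral.integral_eq_sub_of_hasDerivAt (fun x _ => hderiv x)
      (integrable_cauchyPDFReal x₀).intervalIntegrable]
  ring

theorem measureReal_cauchyMeasure_lt_abs {γ : ℝ≥0} (hγ : γ ≠ 0) {r : ℝ} (hr : 0 ≤ r) :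
    (cauchyMeasure 0 γ).real {x | r < |x|} = 2 * stdCauchyCDF (-(r / γ)) := by
  have : {x : ℝ | r < |x|} = (Set.Icc (-r) r)ᶜ := by ext x; simp [← abs_le]
  rw [this, probReal_compl_eq_one_sub measurableSet_Icc,
    measureReal_cauchyMeasure_Icc 0 hγ (by linarith), stdCauchyCDF]
  simp only [sub_zero, neg_div, arctan_neg]
  have := pi_pos
  field_simp
  ring

end ProbabilityTheory

lemma cauchyMeasure_eq_probabilityTheory_cauchyMeasure (l : ℝ) {γ : ℝ≥0} (hγ : γ ≠ 0) :
    _root_.cauchyMeasure l γ = ProbabilityTheory.cauchyMeasure l γ := by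
  rw [cauchyMeasure_of_scale_ne_zero l hγ, _root_.cauchyMeasure]
  congr with x
  rw [cauchyPDF_def, cauchyPDFReal_def, div_eq_mul_inv, mul_inv, add_comm ((γ : ℝ) ^ 2),
    mul_left_comm, mul_assoc]

lemma measureReal_lt_abs_sum_of_iid_cauchy {Ω : Type*} [MeasurableSpace Ω] {P : Measure Ω}
    [IsProbabilityMeasure P] {n : ℕ} (hn : 0 < n) {V : Fin n → Ω → ℝ}
    (hVmeas : ∀ i, Measurable (V i)) (hVlaw : ∀ i, P.map (V i) = _root_.cauchyMeasure 0 1)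
    (hVindep : iIndepFun V P) {t : ℝ} (ht : 0 ≤ t) :
    P.real {ω | n * t < |∑ j, V j ω|} = 2 * stdCauchyCDF (-t) := by
  have hlaw (i : Fin n) : HasLaw (V i) (ProbabilityTheory.cauchyMeasure 0 1) P :=
    ⟨(hVmeas i).aemeasurable, by
      rw [hVlaw, ← NNReal.coe_one,
        cauchyMeasure_eq_probabilityTheory_cauchyMeasure 0 one_ne_zero]⟩
  have hS := hVindep.hasLaw_sum_cauchyMeasure (γ := fun _ => 1) hlaw Finset.univ
  simp only [Finset.sum_fn, Finset.sum_const, Finset.card_univ, Fintype.card_fin,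
    nsmul_eq_mul, mul_one] at hS
  rw [hS.measureReal_eq (p := fun x => n * t < |x|)
      (measurableSet_lt measurable_const measurable_abs),
    measureReal_cauchyMeasure_lt_abs (by positivity) (by positivity), NNReal.coe_natCast,
    mul_div_cancel_left₀ _ (by positivity)]

lemma sum_sq_lt_of_sqrt_sum_sub_mean_sq_lt {n : ℕ} (hn : 0 < n) {α c : ℝ} (hα : 0 ≤ α)
    (v : Fin n → ℝ) (hdev : √(∑ i, (v i - (∑ j, v j) / n) ^ 2) < (n : ℝ) ^ (α + 1 / 2 : ℝ) * c)
    (hmean : |∑ j, v j| ≤ n * (n : ℝ) ^ (α / 2 : ℝ)) :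
    ∑ i, v i ^ 2 < (n : ℝ) ^ (2 * α + 1 : ℝ) * (c ^ 2 + 1) := by
  have hN : (1 : ℝ) ≤ n := by exact_mod_cast hn
  have hvar := Finset.sum_sub_sum_div_card_sq Finset.univ v
  simp only [Finset.card_univ, Fintype.card_fin] at hvar
  have hdev' := Real.lt_sq_of_sqrt_lt hdev
  rw [hvar, mul_pow, ← Real.rpow_mul_natCast (Nat.cast_nonneg n),
    show (α + 1 / 2) * ((2 : ℕ) : ℝ) = 2 * α + 1 by push_cast; ring] at hdev'
  have hmean' : (∑ j, v j) ^ 2 / n ≤ (n : ℝ) ^ (1 + α : ℝ) := by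
    rw [div_le_iff₀ (by positivity), ← sq_abs, Real.rpow_one_add' (by positivity) (by positivity)]
    calc |∑ j, v j| ^ 2 ≤ (n * (n : ℝ) ^ (α / 2 : ℝ)) ^ 2 := by gcongr
      _ = n * (n : ℝ) ^ α * n := by
        rw [mul_pow, ← Real.rpow_mul_natCast (Nat.cast_nonneg n),
          show α / 2 * ((2 : ℕ) : ℝ) = α by push_cast; ring]
        ring
  have hexp : (n : ℝ) ^ (1 + α : ℝ) ≤ (n : ℝ) ^ (2 * α + 1 : ℝ) :=
    Real.rpow_le_rpow_of_exponent_le hN (by linarith)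
  linarith

theorem cauchy_norm_lower_tail_bound_general
    {Ω : Type*} [MeasurableSpace Ω] (P : Measure Ω) [IsProbabilityMeasure P]
    (n : ℕ) (V : Fin n → Ω → ℝ)
    (hVmeas : ∀ i, Measurable (V i))
    (hVlaw : ∀ i, Measure.map (V i) P = _root_.cauchyMeasure 0 1)
    (hVindep : iIndepFun V P)
    (ε α : ℝ) (hα : α ∈ Set.Ioo (0 : ℝ) (1 / 2)) :
    (P {ω | Real.sqrt (∑ i, (V i ω - (∑ j, V j ω) / n) ^ 2)
        < (n : ℝ) ^ (α + 1 / 2 : ℝ) * ε⁻¹}).toReal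
      ≤ (P {ω | (∑ i, (V i ω) ^ 2) < (n : ℝ) ^ (2 * α + 1 : ℝ) * (ε⁻¹ ^ 2 + 1)}).toReal
        + 2 * stdCauchyCDF (-(n : ℝ) ^ (α / 2 : ℝ)) := by
  rcases n.eq_zero_or_pos with rfl | hn
  · have h0 : 2 * stdCauchyCDF (-((0 : ℕ) : ℝ) ^ (α / 2 : ℝ)) = 1 := by
      simp [stdCauchyCDF, Real.zero_rpow (by linarith [hα.1] : α / 2 ≠ 0)]
    rw [h0]
    exact measureReal_le_one.trans (le_add_of_nonneg_left measureReal_nonneg)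
  calc _ ≤ P.real ({ω | (∑ i, (V i ω) ^ 2) < (n : ℝ) ^ (2 * α + 1 : ℝ) * (ε⁻¹ ^ 2 + 1)} ∪
          {ω | n * (n : ℝ) ^ (α / 2 : ℝ) < |∑ j, V j ω|}) :=
        measureReal_mono fun ω hω => or_iff_not_imp_right.2 fun hmean =>
          sum_sq_lt_of_sqrt_sum_sub_mean_sq_lt hn hα.1.le (V · ω) hω (not_lt.1 hmean)
    _ ≤ _ := measureReal_union_le _ _
    _ = _ := by
      rw [measureReal_lt_abs_sum_of_iid_cauchy hn hVmeas hVlaw hVindep (by positivity),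
        measureReal_def]

/-- **Equation (7) of the RECaST paper.** For `V₁,…,Vₙ` i.i.d. standard Cauchy, `ε > 0` and
`α ∈ (0, 1/2)`,
`P(‖V − V̄·1ₙ‖₂ < n^{α+1/2}ε⁻¹) ≤ P(ΣᵢVᵢ² < n^{2α+1}(ε⁻² + 1)) + 2F(−n^{α/2})`,
where `F` is the standard Cauchy CDF. -/
theorem cauchy_norm_lower_tail_bound
    {Ω : Type*} [MeasurableSpace Ω] (P : Measure Ω) [IsProbabilityMeasure P]
    (n : ℕ) (V : Fin n → Ω → ℝ)
    (hVmeas : ∀ i, Measurable (V i))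
    (hVlaw : ∀ i, Measure.map (V i) P = _root_.cauchyMeasure 0 1)
    (hVindep : iIndepFun V P)
    (ε α : ℝ) (hε : 0 < ε) (hα : α ∈ Set.Ioo (0 : ℝ) (1 / 2)) :
    (P {ω | Real.sqrt (∑ i, (V i ω - (∑ j, V j ω) / n) ^ 2)
        < (n : ℝ) ^ (α + 1 / 2 : ℝ) * ε⁻¹}).toReal
      ≤ (P {ω | (∑ i, (V i ω) ^ 2) < (n : ℝ) ^ (2 * α + 1 : ℝ) * (ε⁻¹ ^ 2 + 1)}).toReal
        + 2 * stdCauchyCDF (-(n : ℝ) ^ (α / 2 : ℝ)) :=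
  cauchy_norm_lower_tail_bound_general P n V hVmeas hVlaw hVindep ε α hα
end

section
/- On a probability space, let Y₁,…,Yₙ be i.i.d. N(μ_T, σ²) random variables with σ > 0, let V₁,…,Vₙ be i.i.d. standard Cauchy random variables independent of the Yᵢ's, let c ≠ 0 be a fixed real number, and define γ̂ₙ = [Σᵢ(Vᵢ − V̄)(Yᵢ − Ȳ)]/[c·Σᵢ(Vᵢ − V̄)²]. Then for every ε > 0 and every α ∈ (0, 1/2), P( |γ̂ₙ| > n^{−α/2}·ε ) ≤ exp( −n^{1+α} · (1/2) · ( c²/(2σ²) − n^{−α} + n^{−1−α} ) ) + P( ‖V − V̄·1ₙ‖₂ < n^{α+1/2}·ε⁻¹ ). The first term arises from the Chernoff bound applied with parameter t = 1/4 to S = ‖Y − Ȳ·1ₙ‖₂²/σ², which has a chi-squared distribution with n − 1 degrees of freedom. -/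
/-!
On the event `|γ̂ₙ| > t`, Cauchy–Schwarz gives `‖Y − Ȳ‖ > |c| t ‖V − V̄‖`, so either
`‖V − V̄‖ < s` or `R := ‖Y − Ȳ‖² ≥ (c t s)²`. For the latter, Markov's inequality applied to
`exp (R / (4σ²))` gives the bound `2^{(n-1)/2} exp (−(c t s)² / (4σ²))`, because
`𝔼 exp (R / (4σ²)) = 2^{(n-1)/2}` (the χ²ₙ₋₁ moment generating function at `1/4`).
That expectation is computed from `R = Σ (Yᵢ − μ)² − (Σ (Yᵢ − μ))² / n` by integrating out one
coordinate at a time: each one-dimensional integral is Gaussian and leaves an integrand of the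
same shape.
-/

open MeasureTheory ProbabilityTheory Real

/-- The Cauchy distribution on `ℝ` with location `l` and scale `γ`. -/
noncomputable def cauchyMeasure' (l γ : ℝ) : Measure ℝ :=
  volume.withDensity fun x => ENNReal.ofReal (γ / (π * (γ ^ 2 + (x - l) ^ 2)))

/-- The sample mean `(1/n)Σᵢ Wᵢ(ω)` of a finite family of random variables. -/
noncomputable def sampleMean {Ω : Type*} (n : ℕ) (W : Fin n → Ω → ℝ) (ω : Ω) : ℝ :=
  (∑ i, W i ω) / n

/-- The estimator `γ̂ = Σᵢ(Vᵢ−V̄)(Yᵢ−Ȳ) / (c·Σᵢ(Vᵢ−V̄)²)`. -/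
noncomputable def gammaHat {Ω : Type*} (n : ℕ) (c : ℝ) (V Y : Fin n → Ω → ℝ) (ω : Ω) : ℝ :=
  (∑ i, (V i ω - sampleMean n V ω) * (Y i ω - sampleMean n Y ω)) /
    (c * ∑ i, (V i ω - sampleMean n V ω) ^ 2)

open scoped ENNReal NNReal

lemma neg_mul_sq_add_mul_add_eq {p : ℝ} (hp : p ≠ 0) (q r x : ℝ) :
    -p * x ^ 2 + q * x + r = -p * (x - q / (2 * p)) ^ 2 + (r + q ^ 2 / (4 * p)) := by
  field_simp
  ring

lemma integrable_exp_quadratic {p : ℝ} (hp : 0 < p) (q r : ℝ) :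
    Integrable fun x : ℝ => rexp (-p * x ^ 2 + q * x + r) := by
  simp_rw [neg_mul_sq_add_mul_add_eq hp.ne', Real.exp_add]
  exact ((integrable_exp_neg_mul_sq hp).comp_sub_right _).mul_const _

lemma integral_exp_quadratic {p : ℝ} (hp : 0 < p) (q r : ℝ) :
    ∫ x : ℝ, rexp (-p * x ^ 2 + q * x + r) = rexp (r + q ^ 2 / (4 * p)) * √(π / p) := by
  simp_rw [neg_mul_sq_add_mul_add_eq hp.ne', Real.exp_add]
  rw [integral_mul_const, integral_sub_right_eq_self (fun x => rexp (-p * x ^ 2)),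
    integral_gaussian, mul_comm]

lemma lintegral_gaussianReal_exp_sq_sub_sq (μ : ℝ) {v : ℝ≥0} (hv : v ≠ 0) {γ : ℝ}
    (hγ : 0 ≤ γ) (s A : ℝ) :
    ∫⁻ x, ENNReal.ofReal (rexp ((x - μ) ^ 2 / (4 * v) - γ * (x - μ + s) ^ 2 + A))
        ∂gaussianReal μ v
      = ENNReal.ofReal (√2 / √(1 + 4 * v * γ) * rexp (A - γ / (1 + 4 * v * γ) * s ^ 2)) := by
  have hv₀ : (0 : ℝ) < v := NNReal.coe_pos.mpr (pos_iff_ne_zero.mpr hv)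
  set p : ℝ := 1 / (4 * v) + γ with hp_def
  have hp : 0 < p := by positivity
  set q : ℝ := -2 * γ * s
  set r : ℝ := A - γ * s ^ 2
  have hdensity : ∀ x, gaussianPDFReal μ v x
        * rexp ((x - μ) ^ 2 / (4 * v) - γ * (x - μ + s) ^ 2 + A)
      = (√(2 * π * v))⁻¹ * rexp (-p * (x - μ) ^ 2 + q * (x - μ) + r) := by
    intro x
    rw [gaussianPDFReal, mul_assoc, ← Real.exp_add]
    congr 2
    simp only [p, q, r]
    field_simp
    ring
  have hint : Integrable fun x => (√(2 * π * v))⁻¹ * rexp (-p * (x - μ) ^ 2 + q * (x - μ) + r) :=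
    ((integrable_exp_quadratic hp q r).comp_sub_right μ).const_mul _
  rw [gaussianReal_of_var_ne_zero _ hv, lintegral_withDensity_eq_lintegral_mul _
    (measurable_gaussianPDF _ _) (by fun_prop)]
  simp_rw [Pi.mul_apply, gaussianPDF, ← ENNReal.ofReal_mul (gaussianPDFReal_nonneg _ _ _),
    hdensity]
  rw [← ofReal_integral_eq_lintegral_ofReal hint (.of_forall fun x => by positivity),
    integral_const_mul, integral_sub_right_eq_self (fun x => rexp (-p * x ^ 2 + q * x + r)) μ,
    integral_exp_quadratic hp]
  congr 1
  have hexponent : r + q ^ 2 / (4 * p) = A - γ / (1 + 4 * v * γ) * s ^ 2 := by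
    rw [hp_def]
    field_simp
    ring
  have hconst : (√(2 * π * v))⁻¹ * √(π / p) = √2 / √(1 + 4 * v * γ) := by
    rw [← Real.sqrt_inv, ← Real.sqrt_mul (by positivity), ← Real.sqrt_div zero_le_two, hp_def]
    congr 1
    field_simp
    ring
  rw [hexponent, ← hconst]
  ring

lemma lintegral_pi_gaussianReal_exp_sum_sq_sub_sq (μ : ℝ) {v : ℝ≥0} (hv : v ≠ 0) (m : ℕ)
    {γ : ℝ} (hγ : 0 ≤ γ) :
    ∫⁻ x : Fin m → ℝ, ENNReal.ofReal
        (rexp ((∑ i, (x i - μ) ^ 2) / (4 * v) - γ * (∑ i, (x i - μ)) ^ 2))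
        ∂(Measure.pi fun _ => gaussianReal μ v)
      = ENNReal.ofReal (√2 ^ m / √(1 + 4 * m * v * γ)) := by
  induction m generalizing γ with
  | zero => simp
  | succ m ih =>
    have hD : 0 < 1 + 4 * v * γ := by positivity
    set e := MeasurableEquiv.piFinSuccAbove (fun _ : Fin (m + 1) => ℝ) 0
    have hfirst : ∀ y : Fin m → ℝ, ∫⁻ a, ENNReal.ofReal (rexp ((∑ i, (e.symm (a, y) i - μ) ^ 2)
          / (4 * v) - γ * (∑ i, (e.symm (a, y) i - μ)) ^ 2)) ∂gaussianReal μ v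
        = ENNReal.ofReal (√2 / √(1 + 4 * v * γ)) * ENNReal.ofReal (rexp ((∑ i, (y i - μ) ^ 2)
          / (4 * v) - γ / (1 + 4 * v * γ) * (∑ i, (y i - μ)) ^ 2)) := by
      intro y
      rw [← ENNReal.ofReal_mul (by positivity), ← lintegral_gaussianReal_exp_sq_sub_sq μ hv hγ]
      refine lintegral_congr fun a => ?_
      simp only [e, MeasurableEquiv.piFinSuccAbove_symm_apply, Fin.insertNthEquiv_zero,
        Fin.consEquiv_apply, Fin.sum_univ_succ, Fin.cons_zero, Fin.cons_succ]
      congr 2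
      ring
    rw [← ((measurePreserving_piFinSuccAbove (fun _ => gaussianReal μ v) 0).symm e).lintegral_comp
      (by fun_prop), lintegral_prod_symm _ (by fun_prop)]
    simp_rw [hfirst]
    rw [lintegral_const_mul' _ _ ENNReal.ofReal_ne_top, ih (by positivity),
      ← ENNReal.ofReal_mul (by positivity)]
    congr 1
    have hvar : 1 + 4 * m * v * (γ / (1 + 4 * v * γ))
        = (1 + 4 * (m + 1) * v * γ) / (1 + 4 * v * γ) := by
      field_simp
      ring
    rw [hvar, Real.sqrt_div (by positivity)]
    push_cast
    field_simp
    ring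

lemma sum_sub_sum_div_sq_eq {n : ℕ} (x : Fin n → ℝ) (μ : ℝ) :
    ∑ i, (x i - (∑ j, x j) / n) ^ 2 = ∑ i, (x i - μ) ^ 2 - (∑ i, (x i - μ)) ^ 2 / n := by
  rcases n.eq_zero_or_pos with rfl | hn
  · simp
  have hsum : ∀ m : ℝ, ∑ i, (x i - m) ^ 2 = ∑ i, x i ^ 2 - 2 * m * ∑ i, x i + n * m ^ 2 := by
    intro m
    simp only [sub_sq, Finset.sum_add_distrib, Finset.sum_sub_distrib, Finset.mul_sum,
      Finset.sum_const, Finset.card_univ, Fintype.card_fin, nsmul_eq_mul,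
      mul_right_comm (2 : ℝ) _ m]
  have hn' : (n : ℝ) ≠ 0 := by positivity
  rw [hsum, hsum, Finset.sum_sub_distrib, Finset.sum_const, Finset.card_univ, Fintype.card_fin,
    nsmul_eq_mul]
  field_simp
  ring

section Chernoff

variable {Ω : Type*} [MeasurableSpace Ω] {P : Measure Ω} {n : ℕ}
  {μ : ℝ} {v : ℝ≥0} {Y : Fin n → Ω → ℝ}

lemma aemeasurable_of_map_eq_gaussianReal {X : Ω → ℝ} (hX : P.map X = gaussianReal μ v) :
    AEMeasurable X P :=
  .of_map_ne_zero (by simp [hX, IsProbabilityMeasure.ne_zero])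

lemma lintegral_exp_sum_sq_sub_sampleMean (hn : 0 < n) (hv : v ≠ 0)
    (hYlaw : ∀ i, P.map (Y i) = gaussianReal μ v) (hYindep : iIndepFun Y P) :
    ∫⁻ ω, ENNReal.ofReal (rexp ((∑ i, (Y i ω - sampleMean n Y ω) ^ 2) / (4 * v))) ∂P
      = ENNReal.ofReal (√2 ^ (n - 1)) := by
  have hYmeas i := aemeasurable_of_map_eq_gaussianReal (hYlaw i)
  have hlaw : P.map (fun ω i => Y i ω) = Measure.pi fun _ => gaussianReal μ v := by
    rw [hYindep.map_fun_eq_pi_map hYmeas]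
    simp_rw [hYlaw]
  have hγ : (0 : ℝ) ≤ 1 / (4 * v * n) := by positivity
  have hcentred : ∀ x : Fin n → ℝ,
      (∑ i, (x i - (∑ j, x j) / n) ^ 2) / (4 * v)
        = (∑ i, (x i - μ) ^ 2) / (4 * v) - 1 / (4 * v * n) * (∑ i, (x i - μ)) ^ 2 := by
    intro x
    rw [sum_sub_sum_div_sq_eq x μ]
    ring
  have hF : Measurable fun x : Fin n → ℝ =>
      ENNReal.ofReal (rexp ((∑ i, (x i - (∑ j, x j) / n) ^ 2) / (4 * v))) := by
    fun_prop
  calc ∫⁻ ω, ENNReal.ofReal (rexp ((∑ i, (Y i ω - sampleMean n Y ω) ^ 2) / (4 * v))) ∂P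
      = ∫⁻ x, ENNReal.ofReal (rexp ((∑ i, (x i - (∑ j, x j) / n) ^ 2) / (4 * v)))
          ∂P.map (fun ω i => Y i ω) :=
        (lintegral_map' hF.aemeasurable (aemeasurable_pi_lambda _ hYmeas)).symm
    _ = ENNReal.ofReal (√2 ^ n / √(1 + 4 * n * v * (1 / (4 * v * n)))) := by
        simp_rw [hlaw, hcentred]
        exact lintegral_pi_gaussianReal_exp_sum_sq_sub_sq μ hv n hγ
    _ = ENNReal.ofReal (√2 ^ (n - 1)) := by
        have hv₀ : (v : ℝ) ≠ 0 := NNReal.coe_ne_zero.mpr hv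
        have hn' : (n : ℝ) ≠ 0 := by positivity
        rw [show 1 + 4 * n * v * (1 / (4 * v * n)) = (2 : ℝ) by field_simp; ring,
          ← Nat.sub_add_cancel hn, pow_succ, Nat.add_sub_cancel,
          mul_div_cancel_right₀ _ (by positivity)]

lemma measure_le_sum_sq_sub_sampleMean_le (hn : 0 < n) (hv : v ≠ 0)
    (hYlaw : ∀ i, P.map (Y i) = gaussianReal μ v) (hYindep : iIndepFun Y P) (a : ℝ) :
    P {ω | a ≤ ∑ i, (Y i ω - sampleMean n Y ω) ^ 2}
      ≤ ENNReal.ofReal (√2 ^ (n - 1) * rexp (-(a / (4 * v)))) := by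
  have hYmeas i := aemeasurable_of_map_eq_gaussianReal (hYlaw i)
  have hR : AEMeasurable (fun ω => ∑ i, (Y i ω - sampleMean n Y ω) ^ 2) P := by
    unfold sampleMean
    fun_prop
  set R : Ω → ℝ := fun ω => ∑ i, (Y i ω - sampleMean n Y ω) ^ 2
  have hv₀ : (0 : ℝ) < v := NNReal.coe_pos.mpr (pos_iff_ne_zero.mpr hv)
  calc P {ω | a ≤ R ω}
      ≤ P {ω | ENNReal.ofReal (rexp (a / (4 * v))) ≤ ENNReal.ofReal (rexp (R ω / (4 * v)))} :=
        measure_mono fun ω hω => ENNReal.ofReal_le_ofReal (by gcongr; exact hω)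
    _ ≤ (∫⁻ ω, ENNReal.ofReal (rexp (R ω / (4 * v))) ∂P) / ENNReal.ofReal (rexp (a / (4 * v))) :=
        meas_ge_le_lintegral_div (by fun_prop) (by simp [Real.exp_pos]) ENNReal.ofReal_ne_top
    _ = ENNReal.ofReal (√2 ^ (n - 1) * rexp (-(a / (4 * v)))) := by
        rw [lintegral_exp_sum_sq_sub_sampleMean hn hv hYlaw hYindep, Real.exp_neg,
          ENNReal.ofReal_mul (by positivity), ENNReal.ofReal_inv_of_pos (Real.exp_pos _),
          div_eq_mul_inv]

end Chernoff

lemma mul_le_sqrt_sum_sq_of_lt_abs_div {ι : Type*} [Fintype ι] {x y : ι → ℝ} {c t s : ℝ}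
    (ht : 0 ≤ t) (hs : s ≤ √(∑ i, x i ^ 2))
    (hlt : t < |(∑ i, x i * y i) / (c * ∑ i, x i ^ 2)|) :
    |c| * t * s ≤ √(∑ i, y i ^ 2) := by
  have hden : c * ∑ i, x i ^ 2 ≠ 0 := fun h => by
    rw [h, div_zero, abs_zero] at hlt
    exact hlt.not_ge ht
  have hX : 0 < √(∑ i, x i ^ 2) :=
    Real.sqrt_pos.mpr ((Finset.sum_nonneg fun i _ => sq_nonneg _).lt_of_ne
      (right_ne_zero_of_mul hden).symm)
  generalize hXdef : √(∑ i, x i ^ 2) = X at hs hX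
  have hXX : ∑ i, x i ^ 2 = X * X :=
    hXdef ▸ (Real.mul_self_sqrt (Finset.sum_nonneg fun i _ => sq_nonneg _)).symm
  have hCS : |∑ i, x i * y i| ≤ X * √(∑ i, y i ^ 2) := by
    rw [← hXdef, ← Real.sqrt_mul (Finset.sum_nonneg fun i _ => sq_nonneg _)]
    exact Real.abs_le_sqrt (Finset.sum_mul_sq_le_sq_mul_sq _ _ _)
  rw [abs_div, lt_div_iff₀ (abs_pos.mpr hden), hXX, abs_mul, abs_mul_self] at hlt
  have hmain : |c| * t * X < √(∑ i, y i ^ 2) :=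
    lt_of_mul_lt_mul_right (by linarith) hX.le
  calc |c| * t * s ≤ |c| * t * X := by gcongr
    _ ≤ √(∑ i, y i ^ 2) := hmain.le

lemma gammaHat_abs_gt_subset {Ω : Type*} (n : ℕ) (c : ℝ) (V Y : Fin n → Ω → ℝ) {t s : ℝ}
    (ht : 0 ≤ t) (hs : 0 ≤ s) :
    {ω | |gammaHat n c V Y ω| > t}
      ⊆ {ω | (c * t * s) ^ 2 ≤ ∑ i, (Y i ω - sampleMean n Y ω) ^ 2}
        ∪ {ω | √(∑ i, (V i ω - sampleMean n V ω) ^ 2) < s} := by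
  intro ω hω
  rw [Set.mem_union, Set.mem_ofPred_eq, Set.mem_ofPred_eq, or_iff_not_imp_right, not_lt]
  intro hV
  have hY := mul_le_sqrt_sum_sq_of_lt_abs_div ht hV hω
  rw [Real.le_sqrt (by positivity) (Finset.sum_nonneg fun i _ => sq_nonneg _)] at hY
  simpa only [mul_pow, sq_abs] using hY

lemma sqrt_two_pow_le_exp (k : ℕ) : √2 ^ k ≤ rexp (k / 2) := by
  have hsqrt : √2 ≤ rexp (1 / 2) := by
    rw [Real.exp_half]
    exact Real.sqrt_le_sqrt (by linarith [Real.add_one_le_exp (1 : ℝ)])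
  calc √2 ^ k ≤ rexp (1 / 2) ^ k := by gcongr
    _ = rexp (k / 2) := by rw [← Real.exp_nat_mul]; ring_nf

lemma sqrt_two_pow_mul_exp_le {n : ℕ} (hn : 0 < n) (c σ α : ℝ) :
    √2 ^ (n - 1) * rexp (-(c ^ 2 * (n : ℝ) ^ (1 + α) / (4 * σ ^ 2)))
      ≤ rexp (-(n : ℝ) ^ (1 + α : ℝ) * (1 / 2) *
          (c ^ 2 / (2 * σ ^ 2) - (n : ℝ) ^ (-α : ℝ) + (n : ℝ) ^ (-(1 + α) : ℝ))) := by
  have hN : (0 : ℝ) < n := by exact_mod_cast hn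
  have hmul_neg : (n : ℝ) ^ (1 + α) * (n : ℝ) ^ (-α) = n := by
    rw [← Real.rpow_add hN, add_neg_cancel_right, Real.rpow_one]
  have hmul_inv : (n : ℝ) ^ (1 + α) * (n : ℝ) ^ (-(1 + α)) = 1 := by
    rw [← Real.rpow_add hN, add_neg_cancel, Real.rpow_zero]
  calc √2 ^ (n - 1) * rexp (-(c ^ 2 * (n : ℝ) ^ (1 + α) / (4 * σ ^ 2)))
      ≤ rexp ((n - 1 : ℕ) / 2) * rexp (-(c ^ 2 * (n : ℝ) ^ (1 + α) / (4 * σ ^ 2))) := by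
        gcongr
        exact sqrt_two_pow_le_exp _
    _ = _ := by
        rw [← Real.exp_add, Nat.cast_pred hn]
        congr 1
        linear_combination (-1 / 2 : ℝ) * hmul_neg + (1 / 2 : ℝ) * hmul_inv

theorem gammaHat_tail_bound_general
    {Ω : Type*} [MeasurableSpace Ω] (P : Measure Ω) [IsProbabilityMeasure P]
    (n : ℕ) (μT σ c : ℝ) (hσ : 0 < σ)
    (Y V : Fin n → Ω → ℝ)
    (hYlaw : ∀ i, Measure.map (Y i) P = gaussianReal μT ⟨σ ^ 2, sq_nonneg σ⟩)
    (hYindep : iIndepFun Y P)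
    (ε α : ℝ) (hε : 0 < ε) :
    (P {ω | |gammaHat n c V Y ω| > (n : ℝ) ^ (-(α / 2) : ℝ) * ε}).toReal
      ≤ Real.exp (-(n : ℝ) ^ (1 + α : ℝ) * (1 / 2) *
            (c ^ 2 / (2 * σ ^ 2) - (n : ℝ) ^ (-α : ℝ) + (n : ℝ) ^ (-(1 + α) : ℝ)))
        + (P {ω | Real.sqrt (∑ i, (V i ω - sampleMean n V ω) ^ 2)
            < (n : ℝ) ^ (α + 1 / 2 : ℝ) * ε⁻¹}).toReal := by
  rcases Nat.eq_zero_or_pos n with rfl | hn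
  · have hthreshold : 0 ≤ (0 : ℝ) ^ (-(α / 2) : ℝ) * ε := by positivity
    simp [gammaHat, not_lt.mpr hthreshold]
    positivity
  set t := (n : ℝ) ^ (-(α / 2) : ℝ) * ε
  set s := (n : ℝ) ^ (α + 1 / 2 : ℝ) * ε⁻¹
  have hN : (0 : ℝ) < n := by exact_mod_cast hn
  have hts : (c * t * s) ^ 2 = c ^ 2 * (n : ℝ) ^ (1 + α) := by
    have : t * s = (n : ℝ) ^ ((1 + α) / 2) := by
      rw [mul_mul_mul_comm, ← Real.rpow_add hN, mul_inv_cancel₀ hε.ne', mul_one]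
      ring_nf
    rw [mul_assoc, mul_pow, this, ← Real.rpow_mul_natCast hN.le]
    norm_num
  have hv : (⟨σ ^ 2, sq_nonneg σ⟩ : ℝ≥0) ≠ 0 := NNReal.coe_ne_zero.mp (pow_pos hσ 2).ne'
  calc (P {ω | |gammaHat n c V Y ω| > t}).toReal
      ≤ (P {ω | (c * t * s) ^ 2 ≤ ∑ i, (Y i ω - sampleMean n Y ω) ^ 2}).toReal
          + (P {ω | √(∑ i, (V i ω - sampleMean n V ω) ^ 2) < s}).toReal :=
        (measureReal_mono (gammaHat_abs_gt_subset n c V Y (by positivity) (by positivity))).trans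
          (measureReal_union_le _ _)
    _ ≤ √2 ^ (n - 1) * rexp (-(c ^ 2 * (n : ℝ) ^ (1 + α) / (4 * σ ^ 2)))
          + (P {ω | √(∑ i, (V i ω - sampleMean n V ω) ^ 2) < s}).toReal := by
        gcongr
        rw [← hts]
        exact ENNReal.toReal_le_of_le_ofReal (by positivity)
          (measure_le_sum_sq_sub_sampleMean_le hn hv hYlaw hYindep _)
    _ ≤ _ := by
        gcongr
        exact sqrt_two_pow_mul_exp_le hn c σ α

/-- **Chernoff-type tail bound on `γ̂` (RECaST, proof of Lemma 3).** For `Y₁,…,Yₙ` i.i.d.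
`N(μ_T, σ²)` independent of `V₁,…,Vₙ` i.i.d. standard Cauchy, for any `ε > 0` and
`α ∈ (0, 1/2)`,
`P(|γ̂ₙ| > n^{−α/2}ε) ≤ exp(−n^{1+α}·(1/2)·(c²/(2σ²) − n^{−α} + n^{−1−α}))
  + P(‖V − V̄·1ₙ‖₂ < n^{α+1/2}ε⁻¹)`. -/
theorem gammaHat_tail_bound
    {Ω : Type*} [MeasurableSpace Ω] (P : Measure Ω) [IsProbabilityMeasure P]
    (n : ℕ) (μT σ c : ℝ) (hσ : 0 < σ) (hc : c ≠ 0)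
    (Y V : Fin n → Ω → ℝ)
    (hYmeas : ∀ i, Measurable (Y i)) (hVmeas : ∀ i, Measurable (V i))
    (hYlaw : ∀ i, Measure.map (Y i) P = gaussianReal μT ⟨σ ^ 2, sq_nonneg σ⟩)
    (hVlaw : ∀ i, Measure.map (V i) P = cauchyMeasure' 0 1)
    (hYindep : iIndepFun Y P)
    (hVindep : iIndepFun V P)
    (hYV : IndepFun (fun ω => fun i => Y i ω) (fun ω => fun i => V i ω) P)
    (ε α : ℝ) (hε : 0 < ε) (hα : α ∈ Set.Ioo (0 : ℝ) (1 / 2)) :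
    (P {ω | |gammaHat n c V Y ω| > (n : ℝ) ^ (-(α / 2) : ℝ) * ε}).toReal
      ≤ Real.exp (-(n : ℝ) ^ (1 + α : ℝ) * (1 / 2) *
            (c ^ 2 / (2 * σ ^ 2) - (n : ℝ) ^ (-α : ℝ) + (n : ℝ) ^ (-(1 + α) : ℝ)))
        + (P {ω | Real.sqrt (∑ i, (V i ω - sampleMean n V ω) ^ 2)
            < (n : ℝ) ^ (α + 1 / 2 : ℝ) * ε⁻¹}).toReal :=
  gammaHat_tail_bound_general P n μT σ c hσ Y V hYlaw hYindep ε α hε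
end

section
/- On a probability space, for each n let Y_{n,1},…,Y_{n,n} be i.i.d. N(μ_T, σ²) random variables with σ > 0, let V_{n,1},…,V_{n,n} be i.i.d. standard Cauchy random variables independent of the Y's, let c ≠ 0 be a fixed real number, and define γ̂ₙ = [Σᵢ(V_{n,i} − V̄ₙ)(Y_{n,i} − Ȳₙ)]/[c·Σᵢ(V_{n,i} − V̄ₙ)²]. Then for every α ∈ (0, 1/2), the sequence n^{α/2}·γ̂ₙ converges to 0 in probability as n → ∞; i.e., for every ε > 0, P(|γ̂ₙ| > n^{−α/2}·ε) → 0 as n → ∞. -/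
open MeasureTheory ProbabilityTheory Real Filter

/-!
By Cauchy–Schwarz, `(c γ̂)² Σ(Vᵢ−V̄)² ≤ Σ(Yᵢ−Ȳ)² ≤ Σ(Yᵢ−μ_T)²`, while `Σ(Vᵢ−V̄)² ≥ (Vᵢ−Vⱼ)²/2 ≥ M²/2`
as soon as some `Vᵢ` lies in `(M, 2M]` and some `Vⱼ` in `(−1, 0]`. Hence `|γ̂ₙ| > t` forces either
`Σ(Yᵢ−μ_T)² ≥ c²t²M²/2`, of probability at most `2nσ²/(c²t²M²)` by Markov, or that no `Vᵢ` hits one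
of the two intervals, of probability at most `exp(−n p)` by independence, where `p ≥ 1/(6πM)`
resp. `p ≥ 1/(2π)` bounds the Cauchy mass of the interval. For `t = n^{−α/2}ε` and `M = n^{3/4}`
the three bounds are of order `n^{α−1/2}`, `exp(−n^{1/4}/(6π))` and `exp(−n/(2π))`.
-/

open scoped NNReal Topology

section Deterministic

open Finset

variable {Ω : Type*} {n : ℕ}

lemma sum_sq_sub_sampleMean_le (W : Fin n → Ω → ℝ) (ω : Ω) (m : ℝ) :
    ∑ i, (W i ω - sampleMean n W ω) ^ 2 ≤ ∑ i, (W i ω - m) ^ 2 := by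
  rcases Nat.eq_zero_or_pos n with rfl | hn
  · simp
  set w := sampleMean n W ω
  have hsum : ∑ i, W i ω = n * w := by
    simp only [w, sampleMean]
    field_simp
  have hsplit : ∀ i, (W i ω - m) ^ 2 =
      (W i ω - w) ^ 2 + (2 * (w - m) * W i ω + (m ^ 2 - w ^ 2)) := fun i => by ring
  have hrest : ∑ i : Fin n, (2 * (w - m) * W i ω + (m ^ 2 - w ^ 2)) = n * (w - m) ^ 2 := by
    rw [sum_add_distrib, ← mul_sum, hsum, sum_const, card_univ, Fintype.card_fin, nsmul_eq_mul]
    ring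
  rw [sum_congr rfl fun i _ => hsplit i, sum_add_distrib, hrest]
  have : (0 : ℝ) ≤ n * (w - m) ^ 2 := by positivity
  linarith

lemma sq_sub_le_two_mul_sum_sq_sub_sampleMean (W : Fin n → Ω → ℝ) (ω : Ω) (i j : Fin n) :
    (W i ω - W j ω) ^ 2 ≤ 2 * ∑ k, (W k ω - sampleMean n W ω) ^ 2 := by
  set w := sampleMean n W ω
  rcases eq_or_ne i j with rfl | hij
  · rw [sub_self, zero_pow two_ne_zero]
    positivity
  have hpair : (W i ω - w) ^ 2 + (W j ω - w) ^ 2 ≤ ∑ k, (W k ω - w) ^ 2 := by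
    rw [← sum_pair (f := fun k => (W k ω - w) ^ 2) hij]
    exact sum_le_sum_of_subset_of_nonneg (subset_univ _) fun k _ _ => sq_nonneg _
  nlinarith [sq_nonneg (W i ω + W j ω - 2 * w)]

lemma sq_mul_gammaHat_mul_sum_sq_le (c : ℝ) (V Y : Fin n → Ω → ℝ) (ω : Ω) :
    (c * gammaHat n c V Y ω) ^ 2 * ∑ i, (V i ω - sampleMean n V ω) ^ 2 ≤
      ∑ i, (Y i ω - sampleMean n Y ω) ^ 2 := by
  set u : Fin n → ℝ := fun i => V i ω - sampleMean n V ω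
  set w : Fin n → ℝ := fun i => Y i ω - sampleMean n Y ω
  have hw : 0 ≤ ∑ i, w i ^ 2 := by positivity
  change (c * ((∑ i, u i * w i) / (c * ∑ i, u i ^ 2))) ^ 2 * ∑ i, u i ^ 2 ≤ ∑ i, w i ^ 2
  rcases eq_or_ne (c * ∑ i, u i ^ 2) 0 with h0 | h0
  · simpa [h0] using hw
  have hu : ∑ i, u i ^ 2 ≠ 0 := right_ne_zero_of_mul h0
  have hc : c ≠ 0 := left_ne_zero_of_mul h0
  have hcs : (∑ i, u i * w i) ^ 2 ≤ (∑ i, u i ^ 2) * ∑ i, w i ^ 2 :=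
    sum_mul_sq_le_sq_mul_sq _ _ _
  have hsimp : (c * ((∑ i, u i * w i) / (c * ∑ i, u i ^ 2))) ^ 2 * ∑ i, u i ^ 2
      = (∑ i, u i * w i) ^ 2 / ∑ i, u i ^ 2 := by
    field_simp
  rw [hsimp, div_le_iff₀ (lt_of_le_of_ne (by positivity) hu.symm)]
  linarith

lemma mul_sq_le_two_mul_sum_sq_of_le_abs_gammaHat {c t M : ℝ} {V Y : Fin n → Ω → ℝ}
    {ω : Ω} {i j : Fin n} (ht : 0 ≤ t) (hγ : t ≤ |gammaHat n c V Y ω|) (hM : 0 ≤ M)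
    (hij : M ≤ V i ω - V j ω) (m : ℝ) :
    c ^ 2 * t ^ 2 * M ^ 2 ≤ 2 * ∑ k, (Y k ω - m) ^ 2 := by
  have ht2 : t ^ 2 ≤ gammaHat n c V Y ω ^ 2 := by
    simpa only [sq_abs] using pow_le_pow_left₀ ht hγ 2
  have hM2 : M ^ 2 ≤ (V i ω - V j ω) ^ 2 := pow_le_pow_left₀ hM hij 2
  calc c ^ 2 * t ^ 2 * M ^ 2 ≤ (c * gammaHat n c V Y ω) ^ 2 * (V i ω - V j ω) ^ 2 := by
        rw [mul_pow]; gcongr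
    _ ≤ (c * gammaHat n c V Y ω) ^ 2 * (2 * ∑ k, (V k ω - sampleMean n V ω) ^ 2) := by
        gcongr; exact sq_sub_le_two_mul_sum_sq_sub_sampleMean V ω i j
    _ ≤ 2 * ∑ k, (Y k ω - sampleMean n Y ω) ^ 2 := by
        nlinarith [sq_mul_gammaHat_mul_sum_sq_le c V Y ω]
    _ ≤ 2 * ∑ k, (Y k ω - m) ^ 2 := by
        linarith [sum_sq_sub_sampleMean_le Y ω m]

end Deterministic

open Set

lemma setOf_lt_abs_gammaHat_subset {Ω : Type*} {n : ℕ} {c t M m : ℝ} (ht : 0 ≤ t) (hM : 0 ≤ M)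
    (V Y : Fin n → Ω → ℝ) :
    {ω | t < |gammaHat n c V Y ω|} ⊆ {ω | c ^ 2 * t ^ 2 * M ^ 2 / 2 ≤ ∑ i, (Y i ω - m) ^ 2} ∪
      {ω | ∀ i, V i ω ∉ Ioc M (2 * M)} ∪ {ω | ∀ i, V i ω ∉ Ioc (-1) 0} := by
  intro ω hω
  by_contra hmem
  simp only [mem_union, mem_ofPred_eq, not_or, not_forall, not_not, not_le] at hmem
  obtain ⟨⟨hsmall, i, hi⟩, j, hj⟩ := hmem
  have := mul_sq_le_two_mul_sum_sq_of_le_abs_gammaHat ht hω.le hM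
    (by linarith [hi.1, hj.2] : M ≤ V i ω - V j ω) m
  linarith

lemma ofReal_le_cauchyMeasure_Ioc (a b : ℝ) :
    ENNReal.ofReal ((b - a) / (π * (1 + a ^ 2 + b ^ 2))) ≤
      _root_.cauchyMeasure 0 1 (Ioc a b) := by
  have hdensity : ∀ x ∈ Ioc a b, ENNReal.ofReal (1 / (π * (1 + a ^ 2 + b ^ 2))) ≤
      ENNReal.ofReal (1 / (π * (1 ^ 2 + (x - 0) ^ 2))) := by
    intro x hx
    have hx2 : x ^ 2 ≤ a ^ 2 + b ^ 2 := by
      rcases le_or_gt 0 x with h | h <;> nlinarith [hx.1, hx.2]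
    have hden : 1 ^ 2 + (x - 0) ^ 2 ≤ 1 + a ^ 2 + b ^ 2 := by linarith
    gcongr
  calc ENNReal.ofReal ((b - a) / (π * (1 + a ^ 2 + b ^ 2)))
      = ∫⁻ _ in Ioc a b, ENNReal.ofReal (1 / (π * (1 + a ^ 2 + b ^ 2))) := by
        rw [setLIntegral_const, volume_Ioc, ← ENNReal.ofReal_mul (by positivity)]
        ring_nf
    _ ≤ ∫⁻ x in Ioc a b, ENNReal.ofReal (1 / (π * (1 ^ 2 + (x - 0) ^ 2))) :=
        setLIntegral_mono (by fun_prop) hdensity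
    _ = _root_.cauchyMeasure 0 1 (Ioc a b) := (withDensity_apply _ measurableSet_Ioc).symm

section

variable {Ω : Type*} [MeasurableSpace Ω] {P : Measure Ω}

lemma integrable_sq_sub_of_map_eq_gaussianReal {X : Ω → ℝ} {m : ℝ} {v : ℝ≥0}
    (hX : Measurable X) (hlaw : P.map X = gaussianReal m v) :
    Integrable (fun ω => (X ω - m) ^ 2) P := by
  have h : Integrable (fun x : ℝ => (x - m) ^ 2) (P.map X) := by
    rw [hlaw]
    exact ((memLp_id_gaussianReal 2).sub (memLp_const m)).integrable_sq
  exact (integrable_map_measure (by fun_prop) hX.aemeasurable).mp h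

lemma integral_sq_sub_of_map_eq_gaussianReal {X : Ω → ℝ} {m : ℝ} {v : ℝ≥0}
    (hX : Measurable X) (hlaw : P.map X = gaussianReal m v) :
    ∫ ω, (X ω - m) ^ 2 ∂P = v := by
  rw [← integral_map (f := fun x => (x - m) ^ 2) hX.aemeasurable (by fun_prop), hlaw,
    ← variance_id_gaussianReal (μ := m), variance_eq_integral measurable_id.aemeasurable]
  simp only [id, integral_id_gaussianReal]

lemma measureReal_le_sum_sq_sub_le {n : ℕ} {X : Fin n → Ω → ℝ} {m a : ℝ} {v : ℝ≥0}
    (hX : ∀ i, Measurable (X i)) (hlaw : ∀ i, P.map (X i) = gaussianReal m v) (ha : 0 < a) :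
    P.real {ω | a ≤ ∑ i, (X i ω - m) ^ 2} ≤ n * v / a := by
  rw [le_div_iff₀ ha, mul_comm]
  calc a * P.real {ω | a ≤ ∑ i, (X i ω - m) ^ 2} ≤ ∫ ω, ∑ i, (X i ω - m) ^ 2 ∂P :=
        mul_meas_ge_le_integral_of_nonneg (.of_forall fun ω => by positivity)
          (integrable_finsetSum _ fun i _ => integrable_sq_sub_of_map_eq_gaussianReal (hX i)
            (hlaw i)) a
    _ = n * v := by
        rw [integral_finsetSum _ fun i _ => integrable_sq_sub_of_map_eq_gaussianReal (hX i)
          (hlaw i)]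
        simp [integral_sq_sub_of_map_eq_gaussianReal (hX _) (hlaw _)]

lemma le_measureReal_preimage_Ioc_of_map_eq_cauchyMeasure [IsFiniteMeasure P] {X : Ω → ℝ}
    (hX : Measurable X) (hlaw : P.map X = _root_.cauchyMeasure 0 1) (a b : ℝ) :
    (b - a) / (π * (1 + a ^ 2 + b ^ 2)) ≤ P.real (X ⁻¹' Ioc a b) := by
  rw [measureReal_def, ← ENNReal.ofReal_le_iff_le_toReal (measure_ne_top _ _),
    ← Measure.map_apply hX measurableSet_Ioc, hlaw]
  exact ofReal_le_cauchyMeasure_Ioc a b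

lemma measureReal_forall_notMem_le_exp [IsProbabilityMeasure P] {n : ℕ} {V : Fin n → Ω → ℝ}
    {s : Set ℝ} {p : ℝ}
    (hV : ∀ i, Measurable (V i)) (hindep : iIndepFun V P) (hs : MeasurableSet s)
    (hp : ∀ i, p ≤ P.real (V i ⁻¹' s)) :
    P.real {ω | ∀ i, V i ω ∉ s} ≤ exp (-(n * p)) := by
  have hset : {ω | ∀ i, V i ω ∉ s} = ⋂ i, V i ⁻¹' sᶜ := by ext; simp
  have hfactor : ∀ i, P.real (V i ⁻¹' sᶜ) ≤ exp (-p) := fun i => by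
    rw [preimage_compl, probReal_compl_eq_one_sub (hV i hs)]
    linarith [one_sub_le_exp_neg p, hp i]
  rw [hset, measureReal_def, hindep.meas_iInter fun i => ⟨sᶜ, hs.compl, rfl⟩,
    ENNReal.toReal_prod]
  calc ∏ i, (P (V i ⁻¹' sᶜ)).toReal ≤ exp (-p) ^ n := by
        refine (Finset.prod_le_prod (fun i _ => ENNReal.toReal_nonneg) fun i _ => hfactor i
          ).trans_eq ?_
        simp
    _ = exp (-(n * p)) := by rw [← exp_nat_mul]; ring_nf

theorem measureReal_lt_abs_gammaHat_le [IsProbabilityMeasure P] {n : ℕ} {m c t M : ℝ}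
    {v : ℝ≥0} {V Y : Fin n → Ω → ℝ}
    (hY : ∀ i, Measurable (Y i)) (hV : ∀ i, Measurable (V i))
    (hYlaw : ∀ i, P.map (Y i) = gaussianReal m v)
    (hVlaw : ∀ i, P.map (V i) = _root_.cauchyMeasure 0 1) (hVindep : iIndepFun V P)
    (hc : c ≠ 0) (ht : 0 < t) (hM : 1 ≤ M) :
    P.real {ω | t < |gammaHat n c V Y ω|} ≤
      2 * v * n / (c ^ 2 * t ^ 2 * M ^ 2) + exp (-(n / (6 * π * M))) +
        exp (-(n / (2 * π))) := by
  have hsub := setOf_lt_abs_gammaHat_subset (c := c) (m := m) ht.le (by linarith : 0 ≤ M) V Y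
  set A := {ω | c ^ 2 * t ^ 2 * M ^ 2 / 2 ≤ ∑ i, (Y i ω - m) ^ 2}
  set B := {ω | ∀ i, V i ω ∉ Ioc M (2 * M)}
  set C := {ω | ∀ i, V i ω ∉ Ioc (-1) 0}
  have hA : P.real A ≤ 2 * v * n / (c ^ 2 * t ^ 2 * M ^ 2) := by
    refine (measureReal_le_sum_sq_sub_le hY hYlaw (by positivity)).trans_eq ?_
    field_simp
  have hpB : ∀ i, 1 / (6 * π * M) ≤ P.real (V i ⁻¹' Ioc M (2 * M)) := fun i => by
    refine le_trans ?_ (le_measureReal_preimage_Ioc_of_map_eq_cauchyMeasure (hV i) (hVlaw i) _ _)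
    rw [div_le_div_iff₀ (by positivity) (by positivity)]
    nlinarith [mul_nonneg pi_pos.le (by nlinarith : 0 ≤ M ^ 2 - 1)]
  have hpC : ∀ i, 1 / (2 * π) ≤ P.real (V i ⁻¹' Ioc (-1) 0) := fun i => by
    refine le_trans (le_of_eq ?_)
      (le_measureReal_preimage_Ioc_of_map_eq_cauchyMeasure (hV i) (hVlaw i) _ _)
    ring
  have hB : P.real B ≤ exp (-(n / (6 * π * M))) :=
    (measureReal_forall_notMem_le_exp hV hVindep measurableSet_Ioc hpB).trans_eq
      (by rw [mul_one_div])
  have hC : P.real C ≤ exp (-(n / (2 * π))) :=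
    (measureReal_forall_notMem_le_exp hV hVindep measurableSet_Ioc hpC).trans_eq
      (by rw [mul_one_div])
  calc P.real {ω | t < |gammaHat n c V Y ω|} ≤ P.real (A ∪ B ∪ C) := measureReal_mono hsub
    _ ≤ P.real A + P.real B + P.real C :=
        (measureReal_union_le _ _).trans (by gcongr; exact measureReal_union_le _ _)
    _ ≤ _ := by gcongr

end

lemma div_rpow_sq_mul_rpow_sq {x : ℝ} (hx : 0 < x) (a b : ℝ) :
    x / ((x ^ a) ^ 2 * (x ^ b) ^ 2) = x ^ (1 - 2 * a - 2 * b) := by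
  rw [← rpow_mul_natCast hx.le, ← rpow_mul_natCast hx.le, ← rpow_add hx,
    div_eq_iff (rpow_pos_of_pos hx _).ne', ← rpow_add hx]
  rw [show 1 - 2 * a - 2 * b + (a * (2 : ℕ) + b * (2 : ℕ)) = 1 by push_cast; ring, rpow_one]

lemma tendsto_natCast_rpow_atTop_nhds_zero {β : ℝ} (hβ : β < 0) :
    Tendsto (fun n : ℕ => (n : ℝ) ^ β) atTop (𝓝 0) := by
  have h := (tendsto_rpow_neg_atTop (neg_pos.mpr hβ)).comp tendsto_natCast_atTop_atTop
  simp only [neg_neg] at h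
  exact h

lemma tendsto_mul_natCast_div_rpow_sq {α β : ℝ} (hαβ : 1 + α < 2 * β) (K c ε : ℝ) :
    Tendsto (fun n : ℕ =>
      K * n / (c ^ 2 * ((n : ℝ) ^ (-(α / 2)) * ε) ^ 2 * ((n : ℝ) ^ β) ^ 2)) atTop (𝓝 0) := by
  have h := (tendsto_natCast_rpow_atTop_nhds_zero (by linarith : 1 - 2 * -(α / 2) - 2 * β < 0)
    ).const_mul (K / (c ^ 2 * ε ^ 2))
  rw [mul_zero] at h
  refine h.congr' ?_
  filter_upwards [eventually_gt_atTop 0] with n hn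
  rw [← div_rpow_sq_mul_rpow_sq (Nat.cast_pos.mpr hn), ← mul_div_mul_comm]
  ring_nf

lemma tendsto_exp_neg_natCast_div_mul_rpow {K β : ℝ} (hK : 0 < K) (hβ : β < 1) :
    Tendsto (fun n : ℕ => exp (-(n / (K * (n : ℝ) ^ β)))) atTop (𝓝 0) := by
  refine tendsto_exp_neg_atTop_nhds_zero.comp (Tendsto.congr' ?_
    (((tendsto_rpow_atTop (sub_pos.mpr hβ)).comp tendsto_natCast_atTop_atTop).atTop_div_const hK))
  filter_upwards [eventually_gt_atTop 0] with n hn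
  rw [Function.comp_apply, rpow_sub (Nat.cast_pos.mpr hn), rpow_one]
  field_simp

theorem gammaHat_scaled_tendsto_zero_in_probability_general
    {Ω : Type*} [MeasurableSpace Ω] (P : Measure Ω) [IsProbabilityMeasure P]
    (μT σ c : ℝ) (hc : c ≠ 0)
    (Y V : (n : ℕ) → Fin n → Ω → ℝ)
    (hYmeas : ∀ n i, Measurable (Y n i)) (hVmeas : ∀ n i, Measurable (V n i))
    (hYlaw : ∀ n i, Measure.map (Y n i) P = gaussianReal μT ⟨σ ^ 2, sq_nonneg σ⟩)
    (hVlaw : ∀ n i, Measure.map (V n i) P = _root_.cauchyMeasure 0 1)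
    (hVindep : ∀ n, iIndepFun (V n) P)
    (α : ℝ) (hα : α ∈ Set.Ioo (0 : ℝ) (1 / 2)) :
    ∀ ε > (0 : ℝ),
      Tendsto (fun n : ℕ =>
          (P {ω | |gammaHat n c (V n) (Y n) ω| > (n : ℝ) ^ (-(α / 2) : ℝ) * ε}).toReal)
        atTop (nhds 0) := by
  intro ε hε
  have hbound : ∀ᶠ n : ℕ in atTop,
      P.real {ω | (n : ℝ) ^ (-(α / 2)) * ε < |gammaHat n c (V n) (Y n) ω|} ≤
        2 * σ ^ 2 * n /
            (c ^ 2 * ((n : ℝ) ^ (-(α / 2)) * ε) ^ 2 * ((n : ℝ) ^ (3 / 4 : ℝ)) ^ 2) +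
          exp (-(n / (6 * π * (n : ℝ) ^ (3 / 4 : ℝ)))) + exp (-(n / (2 * π))) := by
    filter_upwards [eventually_ge_atTop 1] with n hn
    exact measureReal_lt_abs_gammaHat_le (hYmeas n) (hVmeas n) (hYlaw n) (hVlaw n) (hVindep n)
      hc (by positivity) (one_le_rpow (by exact_mod_cast hn) (by norm_num))
  refine squeeze_zero' (.of_forall fun _ => measureReal_nonneg) hbound ?_
  simpa using ((tendsto_mul_natCast_div_rpow_sq (by linarith [hα.2]) _ _ _).add
    (tendsto_exp_neg_natCast_div_mul_rpow (by positivity) (by norm_num))).add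
    (tendsto_exp_neg_atTop_nhds_zero.comp
      (tendsto_natCast_atTop_atTop.atTop_div_const (by positivity : 0 < 2 * π)))

/-- **RECaST, proof of Lemma 3:** `n^{α/2}·γ̂ₙ → 0` in probability; i.e., for every `ε > 0`,
`P(|γ̂ₙ| > n^{−α/2}ε) → 0` as `n → ∞`. -/
theorem gammaHat_scaled_tendsto_zero_in_probability
    {Ω : Type*} [MeasurableSpace Ω] (P : Measure Ω) [IsProbabilityMeasure P]
    (μT σ c : ℝ) (hσ : 0 < σ) (hc : c ≠ 0)
    (Y V : (n : ℕ) → Fin n → Ω → ℝ)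
    (hYmeas : ∀ n i, Measurable (Y n i)) (hVmeas : ∀ n i, Measurable (V n i))
    (hYlaw : ∀ n i, Measure.map (Y n i) P = gaussianReal μT ⟨σ ^ 2, sq_nonneg σ⟩)
    (hVlaw : ∀ n i, Measure.map (V n i) P = _root_.cauchyMeasure 0 1)
    (hYindep : ∀ n, iIndepFun (Y n) P)
    (hVindep : ∀ n, iIndepFun (V n) P)
    (hYV : ∀ n, IndepFun (fun ω => fun i => Y n i ω) (fun ω => fun i => V n i ω) P)
    (α : ℝ) (hα : α ∈ Set.Ioo (0 : ℝ) (1 / 2)) :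
    ∀ ε > (0 : ℝ),
      Tendsto (fun n : ℕ =>
          (P {ω | |gammaHat n c (V n) (Y n) ω| > (n : ℝ) ^ (-(α / 2) : ℝ) * ε}).toReal)
        atTop (nhds 0) :=
  gammaHat_scaled_tendsto_zero_in_probability_general P μT σ c hc Y V hYmeas hVmeas hYlaw hVlaw
    hVindep α hα
end
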